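/- Let B_Δ(x,y) be defined as above. Replacing in any multiset of B_Δ(x,y) a copy of P by O, a copy of O by X, or a copy of M by X yields a multiset that is again in B_Δ(x,y). -/

import Mathlib

inductive Lbl : Type
  | M | P | O | X
deriving DecidableEq

open Lbl

/-- The set of multisets of `k` symbols, each drawn from `S`. -/
def FromSet (S : Set Lbl) (k : ℕ) : Set (Multiset Lbl) :=
  {m | Multiset.card m = k ∧ ∀ s ∈ m, s ∈ S}

/-- Concatenation of two pattern sets of multisets. -/
def concatP (A B : Set (Multiset Lbl)) : Set (Multiset Lbl) :=
  {m | ∃ a ∈ A, ∃ b ∈ B, m = a + b}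

/-- `B_Δ(x,y)`: multisets matching `([MX][POX]^{d-1} | [OX]^d)[POX]^y[MPOX]^x`, `d = Δ-x-y`. -/
def Bset (Δ x y : ℕ) : Set (Multiset Lbl) :=
  concatP (concatP ((concatP (FromSet {M, X} 1) (FromSet {P, O, X} (Δ - x - y - 1))) ∪
      FromSet {O, X} (Δ - x - y)) (FromSet {P, O, X} y)) (FromSet Set.univ x)

/-- `W_Δ(x,y)`: multisets matching `(M O^{d-1} | P^d) O^y X^x`, `d = Δ-x-y`. -/
def Wset (Δ x y : ℕ) : Set (Multiset Lbl) :=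
  concatP (concatP ((concatP (FromSet {M} 1) (FromSet {O} (Δ - x - y - 1))) ∪
      FromSet {P} (Δ - x - y)) (FromSet {O} y)) (FromSet {X} x)

/-! Each of the symbol classes `[MX]`, `[POX]`, `[OX]` and `[MPOX]` is closed under the
replacements `P ↦ O`, `O ↦ X` and `M ↦ X`, and a replacement in a concatenation or union of
patterns takes place inside one of its parts, where it can be carried out. -/

def ReplaceClosed (s t : Lbl) (A : Set (Multiset Lbl)) : Prop :=
  ∀ m ∈ A, s ∈ m → t ::ₘ m.erase s ∈ A

namespace ReplaceClosed

variable {s t : Lbl}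

lemma fromSet {S : Set Lbl} (h : s ∈ S → t ∈ S) (k : ℕ) : ReplaceClosed s t (FromSet S k) := by
  rintro m ⟨hcard, hmem⟩ hs
  refine ⟨by rw [Multiset.card_cons, Multiset.card_erase_add_one hs, hcard], fun u hu => ?_⟩
  rcases Multiset.mem_cons.mp hu with rfl | hu
  · exact h (hmem s hs)
  · exact hmem u (Multiset.mem_of_mem_erase hu)

lemma concatP {A B : Set (Multiset Lbl)} (hA : ReplaceClosed s t A) (hB : ReplaceClosed s t B) :
    ReplaceClosed s t (concatP A B) := by
  rintro m ⟨a, ha, b, hb, rfl⟩ hs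
  rcases Multiset.mem_add.mp hs with h | h
  · refine ⟨t ::ₘ a.erase s, hA a ha h, b, hb, ?_⟩
    rw [Multiset.erase_add_left_pos _ h, Multiset.cons_add]
  · refine ⟨a, ha, t ::ₘ b.erase s, hB b hb h, ?_⟩
    rw [Multiset.erase_add_right_pos _ h, Multiset.add_cons]

lemma union {A B : Set (Multiset Lbl)} (hA : ReplaceClosed s t A) (hB : ReplaceClosed s t B) :
    ReplaceClosed s t (A ∪ B) := by
  rintro m (h | h) hs
  · exact Or.inl (hA m h hs)
  · exact Or.inr (hB m h hs)

lemma bset (hMX : s ∈ ({M, X} : Set Lbl) → t ∈ ({M, X} : Set Lbl))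
    (hPOX : s ∈ ({P, O, X} : Set Lbl) → t ∈ ({P, O, X} : Set Lbl))
    (hOX : s ∈ ({O, X} : Set Lbl) → t ∈ ({O, X} : Set Lbl)) (Δ x y : ℕ) :
    ReplaceClosed s t (Bset Δ x y) :=
  .concatP (.concatP (.union (.concatP (.fromSet hMX _) (.fromSet hPOX _)) (.fromSet hOX _))
    (.fromSet hPOX _)) (.fromSet (fun _ => Set.mem_univ t) _)

end ReplaceClosed

theorem stmt_2_general (Δ x y : ℕ) (m : Multiset Lbl) (hm : m ∈ Bset Δ x y) :
    (Lbl.P ∈ m → Lbl.O ::ₘ m.erase Lbl.P ∈ Bset Δ x y) ∧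
    (Lbl.O ∈ m → Lbl.X ::ₘ m.erase Lbl.O ∈ Bset Δ x y) ∧
    (Lbl.M ∈ m → Lbl.X ::ₘ m.erase Lbl.M ∈ Bset Δ x y) :=
  ⟨ReplaceClosed.bset (by simp) (by simp) (by simp) Δ x y m hm,
    ReplaceClosed.bset (by simp) (by simp) (by simp) Δ x y m hm,
    ReplaceClosed.bset (by simp) (by simp) (by simp) Δ x y m hm⟩

theorem stmt_2 (Δ x y : ℕ) (hxy : x + y ≤ Δ) (m : Multiset Lbl) (hm : m ∈ Bset Δ x y) :
    (Lbl.P ∈ m → Lbl.O ::ₘ m.erase Lbl.P ∈ Bset Δ x y) ∧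
    (Lbl.O ∈ m → Lbl.X ::ₘ m.erase Lbl.O ∈ Bset Δ x y) ∧
    (Lbl.M ∈ m → Lbl.X ::ₘ m.erase Lbl.M ∈ Bset Δ x y) :=
  stmt_2_general Δ x y m hm
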